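/- For every p ∈ (0,1) and every ω ∈ ℂ, I_p(ω) = 1 + (1−p)ω + ∑_{N=2}^∞ ((1−p)^N ω^N / (N! · ∏_{n=1}^N (2^n − 1))) · det A_N(p), where the series converges. -/

import Mathlib

open MeasureTheory

/-- The probability measure on `{0,1}` (encoded as `Bool`, `false` ↔ digit `0`,
`true` ↔ digit `1`) giving mass `p` to the digit `0` and mass `1 - p` to the digit `1`. -/
noncomputable def bernoulliBool (p : ℝ) : Measure Bool :=
  ENNReal.ofReal p • Measure.dirac false + ENNReal.ofReal (1 - p) • Measure.dirac true

/-- `ν` is the infinite product, over `n ≥ 1` (indexed here by `ℕ`, where index `n`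
stands for the digit `n+1`), of the Bernoulli measures `bernoulliBool p`:
it is characterized as the projective limit of the finite product measures. -/
def IsBernoulliProduct (p : ℝ) (ν : Measure (ℕ → Bool)) : Prop :=
  IsProjectiveLimit ν fun J : Finset ℕ => Measure.pi fun _ : J => bernoulliBool p

/-- The binary expansion map sending a 0-1 sequence `(x_n)_{n ≥ 1}` to
`∑_{n=1}^∞ x_n 2^{-n}` (index `n : ℕ` stands for the digit `n+1`). -/
noncomputable def binExpand (x : ℕ → Bool) : ℝ :=
  ∑' n : ℕ, if x n then ((2 : ℝ) ^ (n + 1))⁻¹ else 0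

/-- `μ` is the Bernoulli measure `μ_p` on `ℝ`: the pushforward under the binary
expansion map of the infinite product of Bernoulli measures on `{0,1}`. -/
def IsBernoulliMeasure (p : ℝ) (μ : Measure ℝ) : Prop :=
  ∃ ν : Measure (ℕ → Bool), IsBernoulliProduct p ν ∧ μ = ν.map binExpand

/-- The `N × N` real Hessenberg matrix `A_N(p)` (1-indexed in the paper, 0-indexed here):
row `i` (paper row `i+1`) has entries `C(i+1, j)` for `j ≤ i`, the entry
`(1 - 2^{i+1})/(1-p)` at column `j = i+1`, and `0` for `j > i+1`. -/
noncomputable def Amat (N : ℕ) (p : ℝ) : Matrix (Fin N) (Fin N) ℝ := fun i j =>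
  if (j : ℕ) ≤ (i : ℕ) then (Nat.choose ((i : ℕ) + 1) (j : ℕ) : ℝ)
  else if (j : ℕ) = (i : ℕ) + 1 then (1 - 2 ^ ((i : ℕ) + 1)) / (1 - p)
  else 0


/-!
Write `b` for the binary expansion, so that `b x = (x₀ + b (x₁, x₂, …)) / 2`. Under the
product measure the first digit is independent of the tail, which is again Bernoulli, so `μ_p`
is self-similar: `μ_p = p • (x ↦ x/2)_* μ_p + (1 - p) • (x ↦ (1 + x)/2)_* μ_p`. Integrating
`x ^ N` gives the moment recursion `(2 ^ N - 1) m_N = (1 - p) ∑_{k<N} C(N, k) m_k`, `m_0 = 1`,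
which says that `A_N(p)` maps `(m_0, …, m_{N-1})` to a multiple of the last basis vector.
Cramer's rule for the first unknown, whose minor is triangular, gives
`det A_N(p) = m_N ∏_{n=1}^N (2 ^ n - 1) / (1 - p) ^ N`, so the series is the Taylor expansion
`I_p(ω) = ∑ ω ^ N m_N / N!` without its first two terms `1` and `(1 - p) ω`.
-/

open MeasureTheory ProbabilityTheory Matrix

lemma isProbabilityMeasure_bernoulliBool {p : ℝ} (hp : p ∈ Set.Icc 0 1) :
    IsProbabilityMeasure (bernoulliBool p) := by
  constructor
  simp [bernoulliBool, ← ENNReal.ofReal_add hp.1 (sub_nonneg.mpr hp.2)]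

lemma IsBernoulliProduct.eq_infinitePi {p : ℝ} (hp : p ∈ Set.Icc 0 1)
    {ν : Measure (ℕ → Bool)} (hν : IsBernoulliProduct p ν) :
    ν = Measure.infinitePi fun _ => bernoulliBool p :=
  have := isProbabilityMeasure_bernoulliBool hp
  hν.unique (Measure.isProjectiveLimit_infinitePi _)

lemma hasSum_inv_two_pow_succ :
    HasSum (fun n : ℕ => ((2 : ℝ) ^ (n + 1))⁻¹) 1 := by
  convert hasSum_geometric_two' 1 using 1
  ext n
  rw [pow_succ']
  field_simp

lemma binExpand_term_le (x : ℕ → Bool) (n : ℕ) :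
    (if x n then ((2 : ℝ) ^ (n + 1))⁻¹ else 0) ≤ ((2 : ℝ) ^ (n + 1))⁻¹ := by
  split_ifs
  · exact le_rfl
  · positivity

lemma summable_binExpand (x : ℕ → Bool) :
    Summable fun n => if x n then ((2 : ℝ) ^ (n + 1))⁻¹ else 0 :=
  hasSum_inv_two_pow_succ.summable.of_nonneg_of_le (fun _ => by positivity) (binExpand_term_le x)

lemma binExpand_mem_Icc (x : ℕ → Bool) : binExpand x ∈ Set.Icc 0 1 :=
  ⟨tsum_nonneg fun _ => by positivity,
    hasSum_inv_two_pow_succ.tsum_eq ▸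
      (summable_binExpand x).tsum_le_tsum (binExpand_term_le x) hasSum_inv_two_pow_succ.summable⟩

lemma continuous_binExpand : Continuous binExpand :=
  continuous_tsum (fun n => (continuous_of_discreteTopology (f := fun b : Bool =>
      if b then ((2 : ℝ) ^ (n + 1))⁻¹ else 0)).comp (continuous_apply n))
    hasSum_inv_two_pow_succ.summable fun n x => by
      rw [Real.norm_of_nonneg (by positivity)]
      exact binExpand_term_le x n

lemma binExpand_eq_head_tail (x : ℕ → Bool) :
    binExpand x = ((if x 0 then 1 else 0) + binExpand fun n => x (n + 1)) / 2 := by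
  rw [binExpand, (summable_binExpand x).tsum_eq_zero_add, binExpand, add_div,
    ← tsum_div_const]
  congr 1
  · split_ifs <;> norm_num
  · congr 1
    ext n
    split_ifs <;> ring

section HeadTail

variable {X : Type*} [MeasurableSpace X] (P : Measure X) [IsProbabilityMeasure P]

lemma indepFun_head_tail :
    IndepFun (fun x : ℕ → X => x 0) (fun x n => x (n + 1)) (Measure.infinitePi fun _ => P) := by
  -- The coordinates in `{0}` and in `Ioi 0` generate independent σ-algebras; the tail is
  -- measurable for the second one.
  have h := indep_iSup_of_disjoint (fun i => (measurable_pi_apply i).comap_le)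
    (iIndepFun_infinitePi (P := fun _ : ℕ => P) (X := fun _ => id) fun _ => measurable_id).iIndep
    (S := {0}) (T := Set.Ioi 0) (by simp)
  refine indep_of_indep_of_le_right (indep_of_indep_of_le_left h ?_) ?_
  · exact le_iSup₂_of_le (f := fun i (_ : i ∈ ({0} : Set ℕ)) => _) 0 rfl le_rfl
  · refine Measurable.comap_le
      (@measurable_pi_lambda _ _ _ (⨆ i ∈ Set.Ioi 0, _) _ _ fun n => ?_)
    exact Measurable.of_comap_le
      (le_iSup₂_of_le (f := fun i (_ : i ∈ Set.Ioi 0) => _) (n + 1) n.succ_pos le_rfl)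

lemma infinitePi_map_head_tail :
    (Measure.infinitePi fun _ : ℕ => P).map (fun x => (x 0, fun n => x (n + 1))) =
      P.prod (Measure.infinitePi fun _ : ℕ => P) := by
  rw [(indepFun_head_tail P).map_prod_eq_prod_map_map (measurable_pi_apply 0).aemeasurable
    (measurable_pi_lambda _ fun n => measurable_pi_apply (n + 1)).aemeasurable,
    Measure.infinitePi_map_eval, Measure.map_infinitePi_infinitePi_of_inj (add_left_injective 1)]

end HeadTail

lemma bernoulliBool_prod {p : ℝ} {X : Type*} [MeasurableSpace X] (ν : Measure X) [SFinite ν] :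
    (bernoulliBool p).prod ν =
      ENNReal.ofReal p • ν.map (Prod.mk false) +
        ENNReal.ofReal (1 - p) • ν.map (Prod.mk true) := by
  rw [bernoulliBool, Measure.add_prod, Measure.prod_smul_left, Measure.prod_smul_left,
    Measure.dirac_prod, Measure.dirac_prod]

theorem IsBernoulliMeasure.eq_add_map {p : ℝ} (hp : p ∈ Set.Icc 0 1) {μ : Measure ℝ}
    (hμ : IsBernoulliMeasure p μ) :
    μ = ENNReal.ofReal p • μ.map (· / 2) +
      ENNReal.ofReal (1 - p) • μ.map (fun x => (1 + x) / 2) := by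
  obtain ⟨_, hν, rfl⟩ := hμ
  have := isProbabilityMeasure_bernoulliBool hp
  rw [hν.eq_infinitePi hp]
  set ν := Measure.infinitePi fun _ : ℕ => bernoulliBool p
  have hb : Measurable binExpand := continuous_binExpand.measurable
  set g : Bool × (ℕ → Bool) → ℝ := fun z => ((if z.1 then 1 else 0) + binExpand z.2) / 2
  have hg : Measurable g :=
    (((measurable_of_countable fun b : Bool => if b then (1 : ℝ) else 0).comp measurable_fst).add
      (hb.comp measurable_snd)).div_const 2
  calc ν.map binExpand = ((bernoulliBool p).prod ν).map g := by
        rw [← infinitePi_map_head_tail, Measure.map_map hg (measurable_pi_apply 0 |>.prodMk <|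
          measurable_pi_lambda _ fun n => measurable_pi_apply (n + 1))]
        exact congrArg (Measure.map · ν) (funext binExpand_eq_head_tail)
    _ = _ := by
        rw [bernoulliBool_prod, Measure.map_add _ _ hg, Measure.map_smul, Measure.map_smul,
          Measure.map_map hg measurable_prodMk_left, Measure.map_map hg measurable_prodMk_left,
          Measure.map_map (by fun_prop) hb, Measure.map_map (by fun_prop) hb]
        congr 3
        ext x
        simp [g]

lemma IsBernoulliMeasure.isProbabilityMeasure {p : ℝ} (hp : p ∈ Set.Icc 0 1) {μ : Measure ℝ}
    (hμ : IsBernoulliMeasure p μ) : IsProbabilityMeasure μ := by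
  obtain ⟨ν, hν, rfl⟩ := hμ
  have := isProbabilityMeasure_bernoulliBool hp
  rw [hν.eq_infinitePi hp]
  exact Measure.isProbabilityMeasure_map continuous_binExpand.measurable.aemeasurable

lemma IsBernoulliMeasure.ae_mem_Icc {p : ℝ} {μ : Measure ℝ} (hμ : IsBernoulliMeasure p μ) :
    ∀ᵐ x ∂μ, x ∈ Set.Icc (0 : ℝ) 1 := by
  obtain ⟨ν, -, rfl⟩ := hμ
  exact (ae_map_iff continuous_binExpand.measurable.aemeasurable measurableSet_Icc).mpr
    (ae_of_all _ binExpand_mem_Icc)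

lemma integrable_of_ae_mem_compact {X E : Type*} [MeasurableSpace X] [TopologicalSpace X]
    [OpensMeasurableSpace X] [T2Space X] [NormedAddCommGroup E] {μ : Measure X}
    [IsFiniteMeasure μ] {K : Set X} (hK : IsCompact K) (hμK : ∀ᵐ x ∂μ, x ∈ K) {f : X → E}
    (hf : Continuous f) : Integrable f μ := by
  rw [← Measure.restrict_eq_self_of_ae_mem hμK]
  exact hf.continuousOn.integrableOn_compact hK

theorem two_pow_sub_one_mul_integral_pow {p : ℝ} (hp : p ∈ Set.Icc 0 1) {μ : Measure ℝ}
    [IsFiniteMeasure μ] (hμ01 : ∀ᵐ x ∂μ, x ∈ Set.Icc (0 : ℝ) 1)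
    (hμ : μ = ENNReal.ofReal p • μ.map (· / 2) +
      ENNReal.ofReal (1 - p) • μ.map (fun x => (1 + x) / 2)) (N : ℕ) :
    (2 ^ N - 1) * ∫ x, x ^ N ∂μ =
      (1 - p) * ∑ k ∈ Finset.range N, (N.choose k : ℝ) * ∫ x, x ^ k ∂μ := by
  have hint : ∀ {f : ℝ → ℝ}, Continuous f → Integrable f μ :=
    integrable_of_ae_mem_compact isCompact_Icc hμ01
  have hint_map : ∀ {g : ℝ → ℝ}, Continuous g → Integrable (fun x => x ^ N) (μ.map g) :=
    fun hg =>
    (integrable_map_measure (continuous_pow N).aestronglyMeasurable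
      hg.measurable.aemeasurable).mpr (hint ((continuous_pow N).comp hg))
  have hself : ∫ x, x ^ N ∂μ =
      p * ∫ x, (x / 2) ^ N ∂μ + (1 - p) * ∫ x, ((1 + x) / 2) ^ N ∂μ := by
    conv_lhs => rw [hμ]
    rw [integral_add_measure ((hint_map (by fun_prop)).smul_measure ENNReal.ofReal_ne_top)
        ((hint_map (by fun_prop)).smul_measure ENNReal.ofReal_ne_top),
      integral_smul_measure, integral_smul_measure,
      integral_map (by fun_prop) (by fun_prop), integral_map (by fun_prop) (by fun_prop),
      ENNReal.toReal_ofReal hp.1, ENNReal.toReal_ofReal (sub_nonneg.mpr hp.2), smul_eq_mul,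
      smul_eq_mul]
  have hhalf : ∫ x, (x / 2) ^ N ∂μ = (∫ x, x ^ N ∂μ) / 2 ^ N := by
    simp_rw [div_pow]
    exact integral_div _ _
  have hbinom : ∫ x, ((1 + x) / 2) ^ N ∂μ =
      (∑ k ∈ Finset.range (N + 1), (N.choose k : ℝ) * ∫ x, x ^ k ∂μ) / 2 ^ N := by
    simp_rw [div_pow, add_comm (1 : ℝ), add_pow, one_pow, mul_one]
    rw [integral_div, integral_finsetSum _ fun k _ => (hint (by fun_prop)).mul_const _]
    simp_rw [integral_mul_const, mul_comm]
  rw [hhalf, hbinom, Finset.sum_range_succ, Nat.choose_self] at hself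
  field_simp at hself
  linear_combination hself

theorem hasSum_integral_cexp_mul {μ : Measure ℝ} [IsFiniteMeasure μ]
    (hμ : ∀ᵐ x ∂μ, |x| ≤ 1) (ω : ℂ) :
    HasSum (fun N : ℕ => ω ^ N * ((∫ x, x ^ N ∂μ : ℝ) : ℂ) / N.factorial)
      (∫ x, Complex.exp (ω * x) ∂μ) := by
  have hterm : ∀ N : ℕ, ∫ x, (ω * x) ^ N / N.factorial ∂μ =
      ω ^ N * ((∫ x, x ^ N ∂μ : ℝ) : ℂ) / N.factorial := by
    intro N
    simp_rw [mul_pow, ← Complex.ofReal_pow]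
    rw [integral_div, integral_const_mul, integral_complex_ofReal]
  refine (funext hterm) ▸ hasSum_integral_of_dominated_convergence
    (fun N _ => ‖ω‖ ^ N / N.factorial) (fun N => by fun_prop)
    (fun N => hμ.mono fun x hx => ?_)
    (ae_of_all _ fun _ => Real.summable_pow_div_factorial _) (integrable_const _)
    (ae_of_all _ fun x => ?_)
  · rw [norm_div, norm_pow, norm_mul, Complex.norm_natCast, Complex.norm_real]
    gcongr
    exact mul_le_of_le_one_right (norm_nonneg ω) hx
  · rw [Complex.exp_eq_exp_ℂ]
    exact NormedSpace.expSeries_div_hasSum_exp _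

section Hessenberg

variable {p : ℝ} {m : ℕ → ℝ}

lemma Amat_mulVec_eq_single (hp : p ≠ 1)
    (hrec : ∀ N, (2 ^ N - 1) * m N = (1 - p) * ∑ k ∈ Finset.range N, (N.choose k : ℝ) * m k)
    (N : ℕ) :
    Amat (N + 1) p *ᵥ (fun j => m j) =
      Pi.single (Fin.last N) ((2 ^ (N + 1) - 1) * m (N + 1) / (1 - p)) := by
  have hp' : 1 - p ≠ 0 := sub_ne_zero.mpr hp.symm
  ext i
  have hsplit : ∀ j : Fin (N + 1), Amat (N + 1) p i j * m j =
      (if (j : ℕ) ≤ i then ((i + 1 : ℕ).choose j : ℝ) * m j else 0) +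
        if (j : ℕ) = i + 1 then (1 - 2 ^ ((i : ℕ) + 1)) / (1 - p) * m (i + 1) else 0 := by
    intro j
    simp only [Amat]
    split_ifs <;> simp_all
  rw [mulVec, dotProduct, Finset.sum_congr rfl fun j _ => hsplit j, Finset.sum_add_distrib,
    Fin.sum_univ_eq_sum_range
      (fun j => if j ≤ i then ((i + 1 : ℕ).choose j : ℝ) * m j else 0),
    Fin.sum_univ_eq_sum_range
      (fun j => if j = i + 1 then (1 - 2 ^ ((i : ℕ) + 1)) / (1 - p) * m (i + 1) else 0),
    Finset.sum_ite_eq', ← Finset.sum_filter]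
  have hfilter : (Finset.range (N + 1)).filter (· ≤ (i : ℕ)) = Finset.range (i + 1) := by
    ext j
    simp only [Finset.mem_filter, Finset.mem_range]
    omega
  have hrow : ∑ j ∈ Finset.range (i + 1), ((i + 1 : ℕ).choose j : ℝ) * m j =
      (2 ^ ((i : ℕ) + 1) - 1) * m (i + 1) / (1 - p) := by
    rw [eq_div_iff hp', mul_comm, ← hrec]
  rw [hfilter, hrow]
  rcases eq_or_ne i (Fin.last N) with rfl | hi
  · simp
  · have : (i : ℕ) + 1 < N + 1 := by simpa [Fin.ext_iff] using Fin.val_lt_last hi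
    rw [if_pos (Finset.mem_range.mpr this), Pi.single_eq_of_ne hi]
    ring

lemma det_Amat_submatrix_castSucc_succ (N : ℕ) :
    ((Amat (N + 1) p).submatrix Fin.castSucc Fin.succ).det =
      ∏ n ∈ Finset.range N, (1 - 2 ^ (n + 1)) / (1 - p) := by
  rw [det_of_isLowerTriangular _ fun i j hij => ?_, ← Fin.prod_univ_eq_prod_range]
  · refine Finset.prod_congr rfl fun i _ => ?_
    simp [Amat]
  · have hij : (i : ℕ) < j := hij
    simp only [submatrix_apply, Amat, Fin.val_castSucc, Fin.val_succ]
    rw [if_neg (by omega), if_neg (by omega)]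

theorem det_Amat (hp : p ≠ 1) (hm0 : m 0 = 1)
    (hrec : ∀ N, (2 ^ N - 1) * m N = (1 - p) * ∑ k ∈ Finset.range N, (N.choose k : ℝ) * m k)
    (N : ℕ) :
    (Amat (N + 1) p).det =
      m (N + 1) * (∏ n ∈ Finset.range (N + 1), (2 ^ (n + 1) - 1)) / (1 - p) ^ (N + 1) := by
  have hp' : 1 - p ≠ 0 := sub_ne_zero.mpr hp.symm
  -- Cramer's rule for the first unknown `m 0 = 1`.
  have h := congrFun
    (congrArg ((Amat (N + 1) p).adjugate *ᵥ ·) (Amat_mulVec_eq_single hp hrec N)) 0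
  simp only [mulVec_mulVec, adjugate_mul, smul_mulVec, one_mulVec, mulVec_single] at h
  rw [Pi.smul_apply, smul_eq_mul, Fin.val_zero, hm0, mul_one, Pi.smul_apply, op_smul_eq_mul,
    col_apply, adjugate_fin_succ_eq_det_submatrix,
    Fin.succAbove_last, Fin.succAbove_zero, det_Amat_submatrix_castSucc_succ] at h
  rw [h, Finset.prod_range_succ, Finset.prod_div_distrib, Finset.prod_const, Finset.card_range]
  simp only [← neg_sub (2 ^ _ : ℝ) 1, Finset.prod_neg, Finset.card_range, Fin.val_last,
    Fin.val_zero, add_zero]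
  field_simp
  rw [← pow_mul, pow_mul', neg_one_sq, one_pow]
  ring

end Hessenberg

/-- For `p ∈ (0,1)` and `ω ∈ ℂ`, the Taylor series
`I_p(ω) = 1 + (1-p)ω + ∑_{N=2}^∞ ((1-p)^N ω^N / (N! ∏_{n=1}^N (2^n-1))) det A_N(p)`
holds, the series (indexed here by `N : ℕ`, standing for `N+2 ≥ 2`) converging. -/
theorem stmt9 (p : ℝ) (hp : p ∈ Set.Ioo (0 : ℝ) 1) (μ : Measure ℝ)
    (hμ : IsBernoulliMeasure p μ) (ω : ℂ) :
    HasSum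
      (fun N : ℕ =>
        (1 - (p : ℂ)) ^ (N + 2) * ω ^ (N + 2) /
            ((Nat.factorial (N + 2) : ℂ) * ∏ n ∈ Finset.range (N + 2), ((2 : ℂ) ^ (n + 1) - 1)) *
          ((Amat (N + 2) p).det : ℂ))
      ((∫ x in Set.Icc (0 : ℝ) 1, Complex.exp (ω * x) ∂μ) - 1 - (1 - (p : ℂ)) * ω) := by
  have hp01 : p ∈ Set.Icc 0 1 := Set.Ioo_subset_Icc_self hp
  have := hμ.isProbabilityMeasure hp01
  have hrec := two_pow_sub_one_mul_integral_pow hp01 hμ.ae_mem_Icc (hμ.eq_add_map hp01)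
  have hm1 : ∫ x, x ∂μ = 1 - p := by
    have h := hrec 1
    norm_num at h
    exact h
  have hseries := (hasSum_nat_add_iff' 2).mpr <| hasSum_integral_cexp_mul
    (hμ.ae_mem_Icc.mono fun x hx => abs_le.mpr ⟨by linarith [hx.1], hx.2⟩) ω
  have hhead : ∑ i ∈ Finset.range 2, ω ^ i * ((∫ x, x ^ i ∂μ : ℝ) : ℂ) / i.factorial =
      1 + (1 - p) * ω := by
    simp [Finset.sum_range_succ, hm1]
    ring
  rw [hhead, sub_add_eq_sub_sub] at hseries
  rw [Measure.restrict_eq_self_of_ae_mem hμ.ae_mem_Icc]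
  refine hseries.congr_fun fun N => ?_
  have hdet : (Amat (N + 2) p).det = (∫ x, x ^ (N + 2) ∂μ) *
      (∏ n ∈ Finset.range (N + 2), (2 ^ (n + 1) - 1)) / (1 - p) ^ (N + 2) :=
    det_Amat hp.2.ne (by simp) hrec (N + 1)
  have hprod : ∏ n ∈ Finset.range (N + 2), ((2 : ℂ) ^ (n + 1) - 1) ≠ 0 :=
    Finset.prod_ne_zero_iff.mpr fun n _ => sub_ne_zero.mpr <| by
      exact_mod_cast (Nat.one_lt_two_pow n.succ_ne_zero).ne'
  have hp1 : (1 - p : ℂ) ≠ 0 := by exact_mod_cast (sub_pos.mpr hp.2).ne'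
  rw [hdet]
  push_cast
  field_simp
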